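/- Let Υ be a σ-finite Borel measure on (0, ∞) such that ∫ min(1, w) Υ(dw) < ∞, and let z₀ > 0. Then ∫_0^{z₀} z^{-1} ∫_{(0,∞)} (1 - e^{-z w}) Υ(dw) dz < ∞ if and only if ∫_{(0,∞)} log(1 + w) Υ(dw) < ∞. -/

import Mathlib

/-!
For `x ≥ 0` one has `x / (1 + x) ≤ 1 - e^{-x} ≤ 2 x / (1 + x)`, so the integrand
`z⁻¹ (1 - e^{-z w})` is comparable, up to the factor `2`, with `w / (1 + z w) = ∂_z log (1 + z w)`.
By Tonelli the `z`-integral of the latter over `(0, z₀)` is `∫ log (1 + z₀ w) Υ(dw)`, and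
Bernoulli's inequality `1 + n w ≤ (1 + w) ^ n` makes `log (1 + c w)` comparable with `log (1 + w)`
for every `c > 0`.
-/

open MeasureTheory Set ENNReal

section Comparison

variable {α : Type*} [MeasurableSpace α] {μ : Measure α} {f g : α → ℝ≥0∞} {a b : ℝ≥0∞}

theorem lintegral_lt_top_of_ae_le_const_mul (ha : a ≠ ⊤) (hfg : f ≤ᵐ[μ] fun x ↦ a * g x)
    (hg : ∫⁻ x, g x ∂μ < ⊤) : ∫⁻ x, f x ∂μ < ⊤ :=
  calc ∫⁻ x, f x ∂μ ≤ ∫⁻ x, a * g x ∂μ := lintegral_mono_ae hfg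
    _ = a * ∫⁻ x, g x ∂μ := lintegral_const_mul' a g ha
    _ < ⊤ := mul_lt_top ha.lt_top hg

theorem lintegral_lt_top_iff_of_ae_le_const_mul (ha : a ≠ ⊤) (hb : b ≠ ⊤)
    (hfg : f ≤ᵐ[μ] fun x ↦ a * g x) (hgf : g ≤ᵐ[μ] fun x ↦ b * f x) :
    ∫⁻ x, f x ∂μ < ⊤ ↔ ∫⁻ x, g x ∂μ < ⊤ :=
  ⟨lintegral_lt_top_of_ae_le_const_mul hb hgf, lintegral_lt_top_of_ae_le_const_mul ha hfg⟩

end Comparison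

theorem div_one_add_le_one_sub_exp_neg {x : ℝ} (hx : 0 ≤ x) : x / (1 + x) ≤ 1 - Real.exp (-x) := by
  have h1x : 0 < 1 + x := by linarith
  have hexp : Real.exp (-x) ≤ (1 + x)⁻¹ := by
    rw [Real.exp_neg]
    exact inv_anti₀ h1x (by linarith [Real.add_one_le_exp x])
  have hid : x / (1 + x) = 1 - (1 + x)⁻¹ := by field_simp; ring
  linarith

theorem one_sub_exp_neg_le_two_mul_div_one_add {x : ℝ} (hx : 0 ≤ x) :
    1 - Real.exp (-x) ≤ 2 * (x / (1 + x)) := by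
  have hexp : 1 - x ≤ Real.exp (-x) := by linarith [Real.add_one_le_exp (-x)]
  have hpos : 0 < Real.exp (-x) := Real.exp_pos _
  rw [← mul_div_assoc, le_div_iff₀ (by linarith)]
  rcases le_total x 1 with h | h <;> nlinarith

theorem Real.log_one_add_mul_le_nat_mul {c w : ℝ} (hc : 0 ≤ c) (hw : 0 ≤ w) {n : ℕ}
    (hcn : c ≤ n) : Real.log (1 + c * w) ≤ n * Real.log (1 + w) :=
  calc Real.log (1 + c * w) ≤ Real.log ((1 + w) ^ n) := by
        refine Real.log_le_log (by positivity) ?_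
        calc 1 + c * w ≤ 1 + n * w := by gcongr
          _ ≤ (1 + w) ^ n := one_add_mul_le_pow (by linarith) n
    _ = n * Real.log (1 + w) := Real.log_pow (1 + w) n

theorem ofReal_log_one_add_mul_le_ceil_mul {c w : ℝ} (hc : 0 ≤ c) (hw : 0 ≤ w) :
    ENNReal.ofReal (Real.log (1 + c * w)) ≤ ⌈c⌉₊ * ENNReal.ofReal (Real.log (1 + w)) := by
  rw [← ofReal_natCast, ← ofReal_mul (Nat.cast_nonneg _)]
  exact ofReal_le_ofReal (Real.log_one_add_mul_le_nat_mul hc hw (Nat.le_ceil c))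

theorem integral_div_one_add_mul {w a : ℝ} (hw : 0 ≤ w) (ha : 0 ≤ a) :
    ∫ z in (0 : ℝ)..a, w / (1 + z * w) = Real.log (1 + a * w) := by
  have hpos : ∀ z ∈ uIcc 0 a, 0 < 1 + z * w := by
    intro z hz
    rw [uIcc_of_le ha] at hz
    nlinarith [hz.1]
  have hderiv : ∀ z ∈ uIcc 0 a,
      HasDerivAt (fun z ↦ Real.log (1 + z * w)) (w / (1 + z * w)) z := by
    intro z hz
    have hlin : HasDerivAt (fun z : ℝ ↦ 1 + z * w) w z := by
      simpa using ((hasDerivAt_id z).mul_const w).const_add 1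
    simpa [div_eq_inv_mul, Function.comp_def] using
      (Real.hasDerivAt_log (hpos z hz).ne').comp z hlin
  have hcont : ContinuousOn (fun z ↦ w / (1 + z * w)) (uIcc 0 a) :=
    continuousOn_const.div (by fun_prop) fun z hz ↦ (hpos z hz).ne'
  rw [intervalIntegral.integral_eq_sub_of_hasDerivAt hderiv hcont.intervalIntegrable]
  simp

theorem lintegral_Ioo_ofReal_div_one_add_mul {w a : ℝ} (hw : 0 ≤ w) (ha : 0 ≤ a) :
    ∫⁻ z in Ioo 0 a, ENNReal.ofReal (w / (1 + z * w)) = ENNReal.ofReal (Real.log (1 + a * w)) := by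
  have hnonneg : ∀ z ∈ Icc 0 a, 0 ≤ w / (1 + z * w) := fun z hz ↦ by
    have := hz.1; positivity
  have hcont : ContinuousOn (fun z ↦ w / (1 + z * w)) (Icc 0 a) :=
    continuousOn_const.div (by fun_prop) fun z hz ↦ by have := hz.1; positivity
  rw [← ofReal_integral_eq_lintegral_ofReal
      (hcont.integrableOn_Icc.mono_set Ioo_subset_Icc_self)
      ((ae_restrict_iff' measurableSet_Ioo).2 (.of_forall fun z hz ↦
        hnonneg z (Ioo_subset_Icc_self hz))),
    ← integral_Ioc_eq_integral_Ioo, ← intervalIntegral.integral_of_le ha,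
    integral_div_one_add_mul hw ha]

section Immigration

variable (μ : Measure ℝ)

theorem lintegral_div_one_add_mul_le_inv_mul_lintegral_one_sub_exp {z : ℝ} (hz : 0 < z) :
    ∫⁻ w in Ioi 0, ENNReal.ofReal (w / (1 + z * w)) ∂μ ≤
      ENNReal.ofReal z⁻¹ * ∫⁻ w in Ioi 0, ENNReal.ofReal (1 - Real.exp (-(z * w))) ∂μ := by
  rw [← lintegral_const_mul' _ _ ofReal_ne_top]
  refine setLIntegral_mono' measurableSet_Ioi fun w (hw : 0 < w) ↦ ?_
  rw [← ofReal_mul (by positivity)]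
  refine ofReal_le_ofReal ?_
  calc w / (1 + z * w) = z⁻¹ * (z * w / (1 + z * w)) := by field_simp
    _ ≤ z⁻¹ * (1 - Real.exp (-(z * w))) := by
      gcongr; exact div_one_add_le_one_sub_exp_neg (by positivity)

theorem inv_mul_lintegral_one_sub_exp_le_two_mul_lintegral_div_one_add_mul {z : ℝ} (hz : 0 < z) :
    ENNReal.ofReal z⁻¹ * ∫⁻ w in Ioi 0, ENNReal.ofReal (1 - Real.exp (-(z * w))) ∂μ ≤
      2 * ∫⁻ w in Ioi 0, ENNReal.ofReal (w / (1 + z * w)) ∂μ := by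
  rw [← lintegral_const_mul' _ _ ofReal_ne_top, ← lintegral_const_mul' _ _ ofNat_ne_top]
  refine setLIntegral_mono' measurableSet_Ioi fun w (hw : 0 < w) ↦ ?_
  rw [← ofReal_mul (by positivity), ← ofReal_ofNat 2, ← ofReal_mul zero_le_two]
  refine ofReal_le_ofReal ?_
  calc z⁻¹ * (1 - Real.exp (-(z * w))) ≤ z⁻¹ * (2 * (z * w / (1 + z * w))) := by
        gcongr; exact one_sub_exp_neg_le_two_mul_div_one_add (by positivity)
    _ = 2 * (w / (1 + z * w)) := by field_simp

theorem lintegral_Ioo_lintegral_div_one_add_mul [SFinite μ] {a : ℝ} (ha : 0 ≤ a) :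
    ∫⁻ z in Ioo 0 a, ∫⁻ w in Ioi 0, ENNReal.ofReal (w / (1 + z * w)) ∂μ =
      ∫⁻ w in Ioi 0, ENNReal.ofReal (Real.log (1 + a * w)) ∂μ := by
  have hmeas : Measurable fun p : ℝ × ℝ ↦ ENNReal.ofReal (p.2 / (1 + p.1 * p.2)) := by fun_prop
  rw [lintegral_lintegral_swap hmeas.aemeasurable]
  exact setLIntegral_congr_fun measurableSet_Ioi fun w (hw : 0 < w) ↦
    lintegral_Ioo_ofReal_div_one_add_mul hw.le ha

theorem lintegral_log_one_add_mul_lt_top_iff {c : ℝ} (hc : 0 < c) :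
    ∫⁻ w in Ioi 0, ENNReal.ofReal (Real.log (1 + c * w)) ∂μ < ⊤ ↔
      ∫⁻ w in Ioi 0, ENNReal.ofReal (Real.log (1 + w)) ∂μ < ⊤ := by
  refine lintegral_lt_top_iff_of_ae_le_const_mul (natCast_ne_top ⌈c⌉₊)
    (natCast_ne_top ⌈c⁻¹⌉₊) ?_ ?_ <;>
    refine (ae_restrict_iff' measurableSet_Ioi).2 (.of_forall fun w (hw : 0 < w) ↦ ?_)
  · exact ofReal_log_one_add_mul_le_ceil_mul hc.le hw.le
  · simpa [inv_mul_cancel_left₀ hc.ne'] using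
      ofReal_log_one_add_mul_le_ceil_mul (inv_nonneg.2 hc.le) (mul_pos hc hw).le

end Immigration

theorem integral_test_iff_log_moment_superprocess_general (Υ : Measure ℝ) [SigmaFinite Υ]
    (z₀ : ℝ) (hz₀ : 0 < z₀) :
    (∫⁻ z in Set.Ioo (0:ℝ) z₀,
        ENNReal.ofReal z⁻¹ *
          ∫⁻ w in Set.Ioi (0:ℝ), ENNReal.ofReal (1 - Real.exp (-(z * w))) ∂Υ) < ⊤ ↔
      (∫⁻ w in Set.Ioi (0:ℝ), ENNReal.ofReal (Real.log (1 + w)) ∂Υ) < ⊤ := by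
  rw [← lintegral_log_one_add_mul_lt_top_iff Υ hz₀,
    ← lintegral_Ioo_lintegral_div_one_add_mul Υ hz₀.le]
  refine lintegral_lt_top_iff_of_ae_le_const_mul (ofNat_ne_top (n := 2)) one_ne_top ?_ ?_ <;>
    refine (ae_restrict_iff' measurableSet_Ioo).2 (.of_forall fun z (hz : z ∈ Ioo 0 z₀) ↦ ?_)
  · exact inv_mul_lintegral_one_sub_exp_le_two_mul_lintegral_div_one_add_mul Υ hz.1
  · simpa using lintegral_div_one_add_mul_le_inv_mul_lintegral_one_sub_exp Υ hz.1

/-- Integral test for subcritical immigration (superprocess setting): for a σ-finite measure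
`Υ` on `(0,∞)` with `∫ min(1,w) Υ(dw) < ∞`,
`∫_0^{z₀} z⁻¹ ∫ (1 - e^{-zw}) Υ(dw) dz < ∞ ↔ ∫ log(1 + w) Υ(dw) < ∞`. -/
theorem integral_test_iff_log_moment_superprocess (Υ : Measure ℝ) [SigmaFinite Υ]
    (hΥ : (∫⁻ w in Set.Ioi (0:ℝ), ENNReal.ofReal (min 1 w) ∂Υ) < ⊤)
    (z₀ : ℝ) (hz₀ : 0 < z₀) :
    (∫⁻ z in Set.Ioo (0:ℝ) z₀,
        ENNReal.ofReal z⁻¹ *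
          ∫⁻ w in Set.Ioi (0:ℝ), ENNReal.ofReal (1 - Real.exp (-(z * w))) ∂Υ) < ⊤ ↔
      (∫⁻ w in Set.Ioi (0:ℝ), ENNReal.ofReal (Real.log (1 + w)) ∂Υ) < ⊤ :=
  integral_test_iff_log_moment_superprocess_general Υ z₀ hz₀
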